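/- Let a, b > 0 with a − b > 1, let 0 < ε < min{1, (a−1−b)/(224b)}, let φ(t) = 3π/2 for t ≤ 1 and φ(t) = 3π/2 + ε·ln(ln(e + (t−1)⁴)) for t > 1, and let g(t) = t^(a + b·sin(φ(t))) for t > 0, g(0) = 0. Then for every t > 0: 0 < (a − b − 8bε)·t^(a−b−1) ≤ g'(t) ≤ (a + b + 8bε)·(t^(a−b−1) + t^(a+b−1)). -/

import Mathlib

/-!
With `P = a + b sin φ`, logarithmic differentiation gives
`g'(t) = t ^ (P t - 1) * (P t + b cos (φ t) * φ'(t) t log t)`.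
The double logarithm grows so slowly that `|φ'(t) t log t| ≤ 8ε` for every `t`, so the bracket
lies in `[a - b - 8bε, a + b + 8bε]`. On `t ≤ 1` the phase is frozen at `3π/2`, where the exponent
is exactly `a - b`; on `t > 1` the power `t ^ (P t - 1)` is monotone in the exponent, which lies
in `[a - b - 1, a + b - 1]`.
-/

open Real Set Filter Topology

theorem hasDerivAt_ite_le {f f' : ℝ → ℝ} {c k : ℝ} (hf : ∀ x, HasDerivAt f (f' x) x)
    (hfc : f c = k) (hf'c : f' c = 0) (t : ℝ) :
    HasDerivAt (fun x => if x ≤ c then k else f x) (if t ≤ c then 0 else f' t) t := by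
  rcases lt_trichotomy t c with htc | rfl | htc
  · rw [if_pos htc.le]
    refine (hasDerivAt_const t k).congr_of_eventuallyEq ?_
    filter_upwards [Iio_mem_nhds htc] with x hx
    rw [if_pos (le_of_lt hx)]
  · rw [if_pos le_rfl, ← hasDerivWithinAt_univ, ← Iic_union_Ici]
    refine HasDerivWithinAt.union ((hasDerivWithinAt_const t _ k).congr (fun x hx => if_pos hx)
      (if_pos le_rfl)) ?_
    refine ((hf t).hasDerivWithinAt.congr (fun x hx => ?_) (by simp [hfc])).congr_deriv hf'c
    rcases (mem_Ici.mp hx).eq_or_lt with rfl | hx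
    · simp [hfc]
    · simp [not_le.mpr hx]
  · rw [if_neg (not_le.mpr htc)]
    refine (hf t).congr_of_eventuallyEq ?_
    filter_upwards [Ioi_mem_nhds htc] with x hx
    rw [if_neg (not_le.mpr hx)]

theorem one_le_log_exp_one_add {x : ℝ} (hx : 0 ≤ x) : 1 ≤ log (exp 1 + x) := by
  rw [le_log_iff_exp_le (by positivity)]
  linarith

theorem hasDerivAt_log_log_exp_one_add_sub_one_pow_four (t : ℝ) :
    HasDerivAt (fun s => log (log (exp 1 + (s - 1) ^ 4)))
      (4 * (t - 1) ^ 3 / (exp 1 + (t - 1) ^ 4) / log (exp 1 + (t - 1) ^ 4)) t := by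
  have hpow : HasDerivAt (fun s => exp 1 + (s - 1) ^ 4) (4 * (t - 1) ^ 3) t := by
    simpa using (((hasDerivAt_id t).sub_const 1).pow 4).const_add (exp 1)
  refine (hpow.log (by positivity)).log ?_
  exact (zero_lt_one.trans_le (one_le_log_exp_one_add (by positivity))).ne'

theorem pow_three_mul_log_one_add_le {s : ℝ} (hs : 0 ≤ s) :
    4 * s ^ 3 * ((1 + s) * log (1 + s)) ≤ 8 * ((exp 1 + s ^ 4) * log (exp 1 + s ^ 4)) := by
  have he : 2 ≤ exp 1 := by linarith [add_one_le_exp (1 : ℝ)]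
  have hpow : s ^ 3 ≤ 1 + s ^ 4 ∧ s ≤ 1 + s ^ 4 := by
    rcases le_total s 1 with h | h
    · exact ⟨by nlinarith [pow_le_one₀ hs h (n := 3), pow_nonneg hs 4],
        by nlinarith [pow_nonneg hs 4]⟩
    · exact ⟨by nlinarith [pow_le_pow_right₀ h (show 3 ≤ 4 by norm_num)],
        by nlinarith [le_self_pow₀ h (show 4 ≠ 0 by norm_num)]⟩
  have hlog : log (1 + s) ≤ log (exp 1 + s ^ 4) := log_le_log (by linarith) (by linarith)
  calc 4 * s ^ 3 * ((1 + s) * log (1 + s))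
      = (4 * s ^ 3 * (1 + s)) * log (1 + s) := by ring
    _ ≤ (8 * (exp 1 + s ^ 4)) * log (exp 1 + s ^ 4) :=
        mul_le_mul (by nlinarith) hlog (log_nonneg (by linarith)) (by positivity)
    _ = _ := by ring

noncomputable def logLogPhase (ε t : ℝ) : ℝ :=
  if t ≤ 1 then 3 * π / 2 else 3 * π / 2 + ε * log (log (exp 1 + (t - 1) ^ 4))

theorem exists_hasDerivAt_logLogPhase {ε : ℝ} (hε : 0 ≤ ε) (t : ℝ) :
    ∃ φ', HasDerivAt (logLogPhase ε) φ' t ∧ |φ' * (t * log t)| ≤ 8 * ε := by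
  refine ⟨_, hasDerivAt_ite_le (fun s =>
    ((hasDerivAt_log_log_exp_one_add_sub_one_pow_four s).const_mul ε).const_add (3 * π / 2))
    (by simp) (by simp) t, ?_⟩
  split_ifs with ht
  · simpa using mul_nonneg (show (0 : ℝ) ≤ 8 by norm_num) hε
  · obtain ⟨s, hs, rfl⟩ : ∃ s, 0 < s ∧ t = 1 + s := ⟨t - 1, by linarith, by ring⟩
    simp only [add_sub_cancel_left]
    have hL := one_le_log_exp_one_add (pow_nonneg hs.le 4)
    have hlog : 0 ≤ log (1 + s) := log_nonneg (by linarith)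
    have hratio : 4 * s ^ 3 * ((1 + s) * log (1 + s)) / ((exp 1 + s ^ 4) * log (exp 1 + s ^ 4))
        ≤ 8 := (div_le_iff₀ (by positivity)).2 (pow_three_mul_log_one_add_le hs.le)
    calc |ε * (4 * s ^ 3 / (exp 1 + s ^ 4) / log (exp 1 + s ^ 4)) * ((1 + s) * log (1 + s))|
        = ε * (4 * s ^ 3 * ((1 + s) * log (1 + s)) / ((exp 1 + s ^ 4) * log (exp 1 + s ^ 4))) := by
          rw [abs_of_nonneg (by positivity)]
          field_simp
      _ ≤ ε * 8 := mul_le_mul_of_nonneg_left hratio hε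
      _ = 8 * ε := mul_comm ε 8

theorem hasDerivAt_rpow_self_exponent {P : ℝ → ℝ} {P' t : ℝ} (hP : HasDerivAt P P' t)
    (ht : 0 < t) : HasDerivAt (fun s => s ^ P s) (t ^ (P t - 1) * (P t + P' * (t * log t))) t := by
  convert (hasDerivAt_id' t).rpow hP ht using 1
  rw [rpow_sub_one ht.ne']
  field_simp

theorem rpow_le_rpow_add_rpow {t p q r : ℝ} (ht : 0 < t) (hqp : q ≤ p) (hpr : p ≤ r) :
    t ^ p ≤ t ^ q + t ^ r := by
  rcases le_total t 1 with h | h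
  · linarith [rpow_le_rpow_of_exponent_ge ht h hqp, rpow_pos_of_pos ht r]
  · linarith [rpow_le_rpow_of_exponent_le h hpr, rpow_pos_of_pos ht q]

section SineExponent

variable {a b δ t θ X : ℝ}

theorem abs_mul_cos_mul_le (hb : 0 ≤ b) (hX : |X| ≤ δ) : |b * cos θ * X| ≤ b * δ := by
  rw [abs_mul, abs_mul, abs_of_nonneg hb]
  exact mul_le_mul (mul_le_of_le_one_right hb (abs_cos_le_one θ)) hX (abs_nonneg X) hb

theorem rpow_sin_sub_one_mul_le (ht : 0 < t) (hb : 0 ≤ b) (hX : |X| ≤ δ)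
    (hpos : 0 ≤ a + b + b * δ) :
    t ^ (a + b * sin θ - 1) * (a + b * sin θ + b * cos θ * X)
      ≤ (a + b + b * δ) * (t ^ (a - b - 1) + t ^ (a + b - 1)) := by
  have hsin := mul_le_mul_of_nonneg_left (neg_one_le_sin θ) hb
  have hsin' := mul_le_mul_of_nonneg_left (sin_le_one θ) hb
  have hc := abs_le.1 (abs_mul_cos_mul_le (θ := θ) hb hX)
  calc t ^ (a + b * sin θ - 1) * (a + b * sin θ + b * cos θ * X)
      ≤ t ^ (a + b * sin θ - 1) * (a + b + b * δ) :=
        mul_le_mul_of_nonneg_left (by linarith) (rpow_pos_of_pos ht _).le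
    _ ≤ (t ^ (a - b - 1) + t ^ (a + b - 1)) * (a + b + b * δ) :=
        mul_le_mul_of_nonneg_right (rpow_le_rpow_add_rpow ht (by linarith) (by linarith)) hpos
    _ = _ := mul_comm _ _

theorem le_rpow_sin_sub_one_mul (ht : 0 < t) (hb : 0 ≤ b) (hX : |X| ≤ δ)
    (hpos : 0 ≤ a - b - b * δ) (hθ : t ≤ 1 → θ = 3 * π / 2) :
    (a - b - b * δ) * t ^ (a - b - 1)
      ≤ t ^ (a + b * sin θ - 1) * (a + b * sin θ + b * cos θ * X) := by
  have hbδ : 0 ≤ b * δ := mul_nonneg hb ((abs_nonneg X).trans hX)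
  rcases le_or_gt t 1 with h | h
  · have hsin : sin θ = -1 := by simp [hθ h, show 3 * π / 2 = π / 2 + π by ring]
    have hcos : cos θ = 0 := by simp [hθ h, show 3 * π / 2 = π / 2 + π by ring]
    simp only [hsin, hcos, mul_neg_one, ← sub_eq_add_neg, mul_zero, zero_mul, add_zero]
    nlinarith [rpow_pos_of_pos ht (a - b - 1)]
  have hsin := mul_le_mul_of_nonneg_left (neg_one_le_sin θ) hb
  have hc := abs_le.1 (abs_mul_cos_mul_le (θ := θ) hb hX)
  calc (a - b - b * δ) * t ^ (a - b - 1)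
      ≤ (a - b - b * δ) * t ^ (a + b * sin θ - 1) :=
        mul_le_mul_of_nonneg_left (rpow_le_rpow_of_exponent_le h.le (by linarith)) hpos
    _ ≤ (a + b * sin θ + b * cos θ * X) * t ^ (a + b * sin θ - 1) :=
        mul_le_mul_of_nonneg_right (by linarith) (rpow_pos_of_pos ht _).le
    _ = _ := mul_comm _ _

end SineExponent

theorem g_deriv_power_estimate_general (a b ε : ℝ) (hb : 0 < b)
    (hε : 0 < ε) (hε' : ε < min 1 ((a - 1 - b) / (224 * b)))
    (φ : ℝ → ℝ)
    (hφ : ∀ t : ℝ, φ t = if t ≤ 1 then 3 * π / 2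
      else 3 * π / 2 + ε * Real.log (Real.log (Real.exp 1 + (t - 1) ^ 4)))
    (g : ℝ → ℝ)
    (hg : ∀ t : ℝ, 0 < t → g t = t ^ (a + b * Real.sin (φ t))) :
    ∀ t : ℝ, 0 < t →
      0 < (a - b - 8 * b * ε) * t ^ (a - b - 1) ∧
      (a - b - 8 * b * ε) * t ^ (a - b - 1) ≤ deriv g t ∧
      deriv g t ≤ (a + b + 8 * b * ε) * (t ^ (a - b - 1) + t ^ (a + b - 1)) := by
  intro t ht
  have hφ_eq : φ = logLogPhase ε := funext hφ
  obtain ⟨φ', hφ', hφ'_le⟩ := exists_hasDerivAt_logLogPhase hε.le t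
  rw [← hφ_eq] at hφ'
  have hg_eq : g =ᶠ[𝓝 t] fun s => s ^ (a + b * sin (φ s)) := by
    filter_upwards [Ioi_mem_nhds ht] with s hs using hg s hs
  have hderiv : deriv g t = t ^ (a + b * sin (φ t) - 1) *
      (a + b * sin (φ t) + b * cos (φ t) * (φ' * (t * log t))) := by
    rw [hg_eq.deriv_eq,
      (hasDerivAt_rpow_self_exponent ((hφ'.sin.const_mul b).const_add a) ht).deriv]
    ring
  have hsmall : b * (8 * ε) < a - b := by
    have := (lt_div_iff₀ (by positivity)).1 (lt_min_iff.1 hε').2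
    nlinarith [mul_pos hb hε]
  have hθ : t ≤ 1 → φ t = 3 * π / 2 := fun h => by rw [hφ, if_pos h]
  rw [show 8 * b * ε = b * (8 * ε) by ring, hderiv]
  exact ⟨mul_pos (by linarith) (rpow_pos_of_pos ht _),
    le_rpow_sin_sub_one_mul ht hb.le hφ'_le (by linarith) hθ,
    rpow_sin_sub_one_mul_le ht hb.le hφ'_le (by nlinarith [mul_pos hb hε])⟩

theorem g_deriv_power_estimate (a b ε : ℝ) (ha : 0 < a) (hb : 0 < b)
    (hab : 1 < a - b) (hε : 0 < ε) (hε' : ε < min 1 ((a - 1 - b) / (224 * b)))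
    (φ : ℝ → ℝ)
    (hφ : ∀ t : ℝ, φ t = if t ≤ 1 then 3 * π / 2
      else 3 * π / 2 + ε * Real.log (Real.log (Real.exp 1 + (t - 1) ^ 4)))
    (g : ℝ → ℝ) (hg0 : g 0 = 0)
    (hg : ∀ t : ℝ, 0 < t → g t = t ^ (a + b * Real.sin (φ t))) :
    ∀ t : ℝ, 0 < t →
      0 < (a - b - 8 * b * ε) * t ^ (a - b - 1) ∧
      (a - b - 8 * b * ε) * t ^ (a - b - 1) ≤ deriv g t ∧
      deriv g t ≤ (a + b + 8 * b * ε) * (t ^ (a - b - 1) + t ^ (a + b - 1)) :=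
  g_deriv_power_estimate_general a b ε hb hε hε' φ hφ g hg
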